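/- arXiv:math/0404423 — 6 statements merged into one kernel-verified Lean document; each statement's English description precedes it below -/
import Mathlib

section
/- Let λ and μ be coprime integers with 0 < λ < μ, and let a₁, …, a_j be integers, all ≥ 2, with λ/μ = [a₁, …, a_j]. Then the reversed continued fraction satisfies [a_j, a_{j−1}, …, a₁] = λ′/μ, where λ′ is the unique integer with 0 < λ′ < μ and λλ′ ≡ 1 (mod μ). -/
/-!
The continued fraction [a₁, …, a_j] is read off the first column (q, p) of the product `P` of the
matrices `[[aᵢ, -1], [1, 0]]`: it equals p/q, with 0 ≤ p < q when all aᵢ ≥ 2, and `det P = 1`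
makes p/q reduced, so (λ, μ) = (p, q). Each factor's transpose is its conjugate by
`diag(1, -1)`, so the product for the reversed sequence is `diag(1, -1) Pᵀ diag(1, -1)`, with
first column (q, -P₀₁). The determinant gives λ · (-P₀₁) ≡ 1 (mod μ), and 0 ≤ -P₀₁ < μ by the
bounds for the reversed sequence, so -P₀₁ = λ′.
-/

/-- Hirzebruch–Jung continued fraction of a list of integers:
`hjcf [] = 0`, `hjcf (e :: l) = 1 / (e - hjcf l)`, so that `hjcf [e] = 1/e`. -/
def hjcf : List ℤ → ℚ
  | [] => 0
  | e :: l => 1 / ((e : ℚ) - hjcf l)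

open Matrix

def hjMatrix (e : ℤ) : Matrix (Fin 2) (Fin 2) ℤ := !![e, -1; 1, 0]

def continuant (a : List ℤ) : Matrix (Fin 2) (Fin 2) ℤ := (a.map hjMatrix).prod

@[simp]
lemma continuant_nil : continuant [] = 1 := rfl

@[simp]
lemma continuant_cons (e : ℤ) (l : List ℤ) :
    continuant (e :: l) = hjMatrix e * continuant l := by
  simp [continuant]

lemma continuant_append (l l' : List ℤ) :
    continuant (l ++ l') = continuant l * continuant l' := by
  simp [continuant]

lemma det_continuant (a : List ℤ) : (continuant a).det = 1 := by
  induction a with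
  | nil => simp
  | cons e l ih => rw [continuant_cons, det_mul, ih, mul_one]; simp [hjMatrix]

def signFlip : Matrix (Fin 2) (Fin 2) ℤ := !![1, 0; 0, -1]

lemma hjMatrix_transpose (e : ℤ) :
    (hjMatrix e)ᵀ = signFlip * hjMatrix e * signFlip := by
  ext i j; fin_cases i <;> fin_cases j <;> simp [hjMatrix, signFlip]

lemma signFlip_mul_self : signFlip * signFlip = 1 := by
  ext i j; fin_cases i <;> fin_cases j <;> simp [signFlip]

lemma continuant_reverse (a : List ℤ) :
    continuant a.reverse = signFlip * (continuant a)ᵀ * signFlip := by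
  induction a with
  | nil => simp only [List.reverse_nil, continuant_nil, transpose_one, mul_one, signFlip_mul_self]
  | cons e l ih =>
    simp only [List.reverse_cons, continuant_append, ih, continuant_cons, continuant_nil, mul_one,
      transpose_mul, hjMatrix_transpose, Matrix.mul_assoc, signFlip_mul_self]

lemma continuant_cons_zero_zero (e : ℤ) (l : List ℤ) :
    continuant (e :: l) 0 0 = e * continuant l 0 0 - continuant l 1 0 := by
  simp [hjMatrix, Matrix.mul_apply, sub_eq_add_neg]

lemma continuant_cons_one_zero (e : ℤ) (l : List ℤ) :
    continuant (e :: l) 1 0 = continuant l 0 0 := by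
  simp [hjMatrix, Matrix.mul_apply]

lemma continuant_bounds {a : List ℤ} (h2 : ∀ e ∈ a, 2 ≤ e) :
    0 ≤ continuant a 1 0 ∧ continuant a 1 0 < continuant a 0 0 := by
  induction a with
  | nil => simp
  | cons e l ih =>
    obtain ⟨he, hl⟩ := List.forall_mem_cons.mp h2
    obtain ⟨hp, hpq⟩ := ih hl
    rw [continuant_cons_zero_zero, continuant_cons_one_zero]
    constructor <;> nlinarith

lemma hjcf_eq_div {a : List ℤ} (h2 : ∀ e ∈ a, 2 ≤ e) :
    hjcf a = (continuant a 1 0 : ℚ) / continuant a 0 0 := by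
  induction a with
  | nil => simp [hjcf]
  | cons e l ih =>
    have hl := (List.forall_mem_cons.mp h2).2
    obtain ⟨hp, hpq⟩ := continuant_bounds hl
    have hq : (continuant l 0 0 : ℚ) ≠ 0 := by exact_mod_cast (hp.trans_lt hpq).ne'
    rw [hjcf, ih hl, continuant_cons_zero_zero, continuant_cons_one_zero]
    push_cast
    field_simp

lemma continuant_reverse_one_zero (a : List ℤ) :
    continuant a.reverse 1 0 = -continuant a 0 1 := by
  simp [continuant_reverse, signFlip, Matrix.mul_apply, Matrix.vecMul, dotProduct, Fin.sum_univ_two]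

lemma continuant_reverse_zero_zero (a : List ℤ) :
    continuant a.reverse 0 0 = continuant a 0 0 := by
  simp [continuant_reverse, signFlip, Matrix.mul_apply, Matrix.vecMul, dotProduct, Fin.sum_univ_two]

lemma Int.eq_of_mul_modEq_one {a m x y : ℤ} (hx : a * x ≡ 1 [ZMOD m]) (hy : a * y ≡ 1 [ZMOD m])
    (hx0 : 0 ≤ x) (hxm : x < m) (hy0 : 0 ≤ y) (hym : y < m) : x = y := by
  have hxy : x ≡ y [ZMOD m] :=
    calc x = x * 1 := (mul_one x).symm
      _ ≡ x * (a * y) [ZMOD m] := hy.symm.mul_left x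
      _ = a * x * y := by ring
      _ ≡ 1 * y [ZMOD m] := hx.mul_right y
      _ = y := one_mul y
  rwa [Int.ModEq, Int.emod_eq_of_lt hx0 hxm, Int.emod_eq_of_lt hy0 hym] at hxy

theorem hjcf_reverse_general (lam mu : ℤ)
    (hco : IsCoprime lam mu)
    (a : List ℤ) (h2 : ∀ e ∈ a, 2 ≤ e)
    (hval : (lam : ℚ) / (mu : ℚ) = hjcf a)
    (lam' : ℤ) (h0' : 0 < lam') (hlt' : lam' < mu)
    (hcong : lam * lam' ≡ 1 [ZMOD mu]) :
    hjcf a.reverse = (lam' : ℚ) / (mu : ℚ) := by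
  have h2rev : ∀ e ∈ a.reverse, 2 ≤ e := fun e he => h2 e (List.mem_reverse.mp he)
  obtain ⟨hp, hpq⟩ := continuant_bounds h2
  obtain ⟨hr, hrq⟩ := continuant_bounds h2rev
  have hdet := det_continuant a
  rw [hjcf_eq_div h2] at hval
  rw [hjcf_eq_div h2rev, continuant_reverse_one_zero, continuant_reverse_zero_zero] at *
  generalize continuant a = P at *
  rw [det_fin_two] at hdet
  have hPco : IsCoprime (P 1 0) (P 0 0) := ⟨-P 0 1, P 1 1, by linarith⟩
  obtain ⟨rfl, rfl⟩ := Rat.div_int_inj (h0'.trans hlt') (hp.trans_lt hpq)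
    (Int.isCoprime_iff_gcd_eq_one.mp hco) (Int.isCoprime_iff_gcd_eq_one.mp hPco) hval
  have hinv : P 1 0 * -P 0 1 ≡ 1 [ZMOD P 0 0] := Int.modEq_iff_dvd.mpr ⟨P 1 1, by linarith⟩
  rw [Int.eq_of_mul_modEq_one hinv hcong hr hrq h0'.le hlt']

/-- If λ/μ = [a₁, …, a_j] with all aᵢ ≥ 2, 0 < λ < μ, gcd(λ,μ) = 1,
then the reversed continued fraction [a_j, …, a₁] equals λ'/μ where
0 < λ' < μ and λλ' ≡ 1 (mod μ). -/
theorem hjcf_reverse (lam mu : ℤ) (h0 : 0 < lam) (hlm : lam < mu)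
    (hco : IsCoprime lam mu)
    (a : List ℤ) (ha : a ≠ []) (h2 : ∀ e ∈ a, 2 ≤ e)
    (hval : (lam : ℚ) / (mu : ℚ) = hjcf a)
    (lam' : ℤ) (h0' : 0 < lam') (hlt' : lam' < mu)
    (hcong : lam * lam' ≡ 1 [ZMOD mu]) :
    hjcf a.reverse = (lam' : ℚ) / (mu : ℚ) :=
  hjcf_reverse_general lam mu hco a h2 hval lam' h0' hlt' hcong
end

section
/- Let a₁, …, a_j and b₁, …, b_r be integers, all ≥ 2, such that [a₁, …, a_j] + [b₁, …, b_r] = 1. Then the reversed continued fractions satisfy [a_j, …, a₁] + [b_r, …, b₁] = 1. -/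
open Matrix

namespace Matrix

lemma isCoprime_apply_one_zero_of_det_eq_one {A : Matrix (Fin 2) (Fin 2) ℤ}
    (hA : A.det = 1) : IsCoprime (A 1 0) (A 0 0) :=
  ⟨-A 0 1, A 1 1, by rw [det_fin_two] at hA; linear_combination hA⟩

lemma apply_one_zero_mul_neg_modEq_one_of_det_eq_one {A : Matrix (Fin 2) (Fin 2) ℤ}
    (hA : A.det = 1) : A 1 0 * -A 0 1 ≡ 1 [ZMOD A 0 0] :=
  Int.modEq_iff_dvd.mpr ⟨A 1 1, by rw [det_fin_two] at hA; linear_combination -hA⟩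

end Matrix

lemma eq_and_add_eq_of_div_add_div_eq_one {p₁ p₂ q₁ q₂ : ℤ} (hp₁ : 0 < p₁) (hp₂ : 0 < p₂)
    (hc₁ : IsCoprime q₁ p₁) (hc₂ : IsCoprime q₂ p₂) (h : (q₁ / p₁ : ℚ) + q₂ / p₂ = 1) :
    p₁ = p₂ ∧ q₁ + q₂ = p₁ := by
  have hden {p q : ℤ} (hp : 0 < p) (hc : IsCoprime q p) : ((q / p : ℚ).den : ℤ) = p := by
    rw [Rat.den_div_eq_of_coprime hp (Int.isCoprime_iff_gcd_eq_one.mp hc)]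
  obtain rfl : p₁ = p₂ := by
    rw [← hden hp₁ hc₁, ← hden hp₂ hc₂, eq_sub_of_add_eq' h, ← Int.cast_one,
      Rat.intCast_sub_den]
  refine ⟨rfl, ?_⟩
  rw [← add_div, div_eq_one_iff_eq (by positivity)] at h
  exact_mod_cast h

lemma add_eq_of_mul_modEq_one {p q₁ q₂ x₁ x₂ : ℤ} (hp : 1 < p) (hq : q₁ + q₂ = p)
    (h₁ : q₁ * x₁ ≡ 1 [ZMOD p]) (h₂ : q₂ * x₂ ≡ 1 [ZMOD p])
    (hx₁ : 0 ≤ x₁) (hx₂ : 0 ≤ x₂) (hx₁p : x₁ < p) (hx₂p : x₂ < p) : x₁ + x₂ = p := by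
  obtain ⟨k₁, hk₁⟩ := h₁.dvd
  obtain ⟨k₂, hk₂⟩ := h₂.dvd
  -- `x₁ + x₂ ≡ x₁ (q₂ x₂) + x₂ (q₁ x₁) = (q₁ + q₂) x₁ x₂ ≡ 0`
  obtain ⟨m, hm⟩ : p ∣ x₁ + x₂ :=
    ⟨x₁ * x₂ + x₁ * k₂ + x₂ * k₁, by linear_combination x₂ * hk₁ + x₁ * hk₂ + x₁ * x₂ * hq⟩
  have hm_pos : 0 < m := by
    by_contra! hm_nonpos
    obtain rfl : x₁ = 0 := by nlinarith
    have : p = 1 := Int.eq_one_of_mul_eq_one_right (by omega) (by linarith)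
    omega
  obtain rfl : m = 1 := by nlinarith
  rw [hm, mul_one]

def hjcfStep (e : ℤ) : Matrix (Fin 2) (Fin 2) ℤ := !![e, -1; 1, 0]

def hjcfMatrix (l : List ℤ) : Matrix (Fin 2) (Fin 2) ℤ := (l.map hjcfStep).prod

@[simp] lemma hjcfMatrix_nil : hjcfMatrix [] = 1 := rfl

@[simp] lemma hjcfMatrix_cons (e : ℤ) (l : List ℤ) :
    hjcfMatrix (e :: l) = hjcfStep e * hjcfMatrix l := List.prod_cons

lemma hjcfMatrix_concat (l : List ℤ) (e : ℤ) :
    hjcfMatrix (l ++ [e]) = hjcfMatrix l * hjcfStep e := by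
  simp [hjcfMatrix]

lemma hjcfMatrix_cons_apply_zero_zero (e : ℤ) (l : List ℤ) :
    hjcfMatrix (e :: l) 0 0 = e * hjcfMatrix l 0 0 - hjcfMatrix l 1 0 := by
  simp [hjcfStep, mul_apply, Fin.sum_univ_two]
  ring

lemma hjcfMatrix_cons_apply_one_zero (e : ℤ) (l : List ℤ) :
    hjcfMatrix (e :: l) 1 0 = hjcfMatrix l 0 0 := by
  simp [hjcfStep, mul_apply, Fin.sum_univ_two]

lemma det_hjcfMatrix (l : List ℤ) : (hjcfMatrix l).det = 1 := by
  induction l with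
  | nil => simp
  | cons e l ih => rw [hjcfMatrix_cons, det_mul, ih, hjcfStep, det_fin_two_of]; ring

lemma hjcfMatrix_bounds {l : List ℤ} (h : ∀ e ∈ l, 2 ≤ e) :
    0 ≤ hjcfMatrix l 1 0 ∧ hjcfMatrix l 1 0 < hjcfMatrix l 0 0 := by
  induction l with
  | nil => simp
  | cons e l ih =>
    obtain ⟨hq, hqp⟩ := ih fun x hx => h x (List.mem_cons_of_mem e hx)
    have he : 2 ≤ e := h e List.mem_cons_self
    rw [hjcfMatrix_cons_apply_zero_zero, hjcfMatrix_cons_apply_one_zero]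
    constructor <;> nlinarith

lemma hjcf_eq_div_s4 {l : List ℤ} (h : ∀ e ∈ l, 2 ≤ e) :
    hjcf l = hjcfMatrix l 1 0 / hjcfMatrix l 0 0 := by
  induction l with
  | nil => simp [hjcf]
  | cons e l ih =>
    have hl : ∀ x ∈ l, 2 ≤ x := fun x hx => h x (List.mem_cons_of_mem e hx)
    have hp : (0 : ℚ) < hjcfMatrix l 0 0 := by
      obtain ⟨hq, hqp⟩ := hjcfMatrix_bounds hl
      exact_mod_cast hq.trans_lt hqp
    have hp' : (0 : ℚ) < hjcfMatrix (e :: l) 0 0 := by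
      obtain ⟨hq, hqp⟩ := hjcfMatrix_bounds h
      exact_mod_cast hq.trans_lt hqp
    rw [hjcfMatrix_cons_apply_zero_zero] at hp'
    rw [hjcf, ih hl, hjcfMatrix_cons_apply_zero_zero, hjcfMatrix_cons_apply_one_zero]
    push_cast at hp' ⊢
    field_simp

lemma transpose_hjcfStep (e : ℤ) : (hjcfStep e)ᵀ = signFlip * hjcfStep e * signFlip := by
  ext i j
  fin_cases i <;> fin_cases j <;> simp [hjcfStep, signFlip]

lemma hjcfMatrix_reverse (l : List ℤ) :
    hjcfMatrix l.reverse = signFlip * (hjcfMatrix l)ᵀ * signFlip := by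
  induction l with
  | nil => simp [signFlip_mul_self]
  | cons e l ih =>
    rw [List.reverse_cons, hjcfMatrix_concat, ih, hjcfMatrix_cons, transpose_mul,
      transpose_hjcfStep]
    simp only [Matrix.mul_assoc, signFlip_mul_self, Matrix.mul_one]

lemma hjcfMatrix_reverse_apply_zero_zero (l : List ℤ) :
    hjcfMatrix l.reverse 0 0 = hjcfMatrix l 0 0 := by
  simp [hjcfMatrix_reverse, signFlip, mul_apply, Fin.sum_univ_two, vecMul, dotProduct]

lemma hjcfMatrix_reverse_apply_one_zero (l : List ℤ) :
    hjcfMatrix l.reverse 1 0 = -hjcfMatrix l 0 1 := by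
  simp [hjcfMatrix_reverse, signFlip, mul_apply, Fin.sum_univ_two, vecMul, dotProduct]

lemma hjcf_reverse_eq_div {l : List ℤ} (h : ∀ e ∈ l, 2 ≤ e) :
    hjcf l.reverse = -hjcfMatrix l 0 1 / hjcfMatrix l 0 0 := by
  rw [hjcf_eq_div_s4 (by simpa using h), hjcfMatrix_reverse_apply_one_zero,
    hjcfMatrix_reverse_apply_zero_zero, Int.cast_neg]

lemma hjcfMatrix_reverse_bounds {l : List ℤ} (h : ∀ e ∈ l, 2 ≤ e) :
    0 ≤ -hjcfMatrix l 0 1 ∧ -hjcfMatrix l 0 1 < hjcfMatrix l 0 0 := by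
  simpa [hjcfMatrix_reverse_apply_one_zero, hjcfMatrix_reverse_apply_zero_zero] using
    hjcfMatrix_bounds (l := l.reverse) (by simpa using h)

theorem hjcf_reverse_sum_one_general (a b : List ℤ)
    (h2a : ∀ e ∈ a, 2 ≤ e) (h2b : ∀ e ∈ b, 2 ≤ e)
    (hsum : hjcf a + hjcf b = 1) :
    hjcf a.reverse + hjcf b.reverse = 1 := by
  obtain ⟨hqa, hqpa⟩ := hjcfMatrix_bounds h2a
  obtain ⟨hqb, hqpb⟩ := hjcfMatrix_bounds h2b
  obtain ⟨hxa, hxpa⟩ := hjcfMatrix_reverse_bounds h2a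
  obtain ⟨hxb, hxpb⟩ := hjcfMatrix_reverse_bounds h2b
  rw [hjcf_eq_div_s4 h2a, hjcf_eq_div_s4 h2b] at hsum
  obtain ⟨hp, hq⟩ := eq_and_add_eq_of_div_add_div_eq_one (by omega) (by omega)
    (isCoprime_apply_one_zero_of_det_eq_one (det_hjcfMatrix a))
    (isCoprime_apply_one_zero_of_det_eq_one (det_hjcfMatrix b)) hsum
  have hx := add_eq_of_mul_modEq_one (by omega) hq
    (apply_one_zero_mul_neg_modEq_one_of_det_eq_one (det_hjcfMatrix a))
    (hp ▸ apply_one_zero_mul_neg_modEq_one_of_det_eq_one (det_hjcfMatrix b))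
    hxa hxb hxpa (hp ▸ hxpb)
  rw [hjcf_reverse_eq_div h2a, hjcf_reverse_eq_div h2b, ← hp, ← add_div,
    div_eq_one_iff_eq (by exact_mod_cast (hqa.trans_lt hqpa).ne')]
  exact_mod_cast hx

/-- If [a₁, …, a_j] + [b₁, …, b_r] = 1 with all entries ≥ 2, then the same
holds for the reversed continued fractions. -/
theorem hjcf_reverse_sum_one (a b : List ℤ) (ha : a ≠ []) (hb : b ≠ [])
    (h2a : ∀ e ∈ a, 2 ≤ e) (h2b : ∀ e ∈ b, 2 ≤ e)
    (hsum : hjcf a + hjcf b = 1) :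
    hjcf a.reverse + hjcf b.reverse = 1 :=
  hjcf_reverse_sum_one_general a b h2a h2b hsum
end

section
/- With E, F, S, G, Q, c, C₁, C₂, λ₀, λ₁, λ₂, x and T_x as in the context, the map T_x sends the closed ball B̄ = { y ∈ F : ‖y‖ ≤ λ₂/(C₁C₂²) } into itself, and for all y, y′ ∈ B̄ one has ‖T_x(y) − T_x(y′)‖ ≤ 2(λ₁ + λ₂)·‖y − y′‖; in particular T_x is a contraction of B̄. -/
/-!
A map with `‖Q a - Q b‖ ≤ C₁ (‖a‖ + ‖b‖) ‖a - b‖` and `Q 0 = 0` is quadratically small,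
`‖Q a‖ ≤ C₁ ‖a‖²`, and Lipschitz with constant `2 C₁ r` on the ball of radius `r`.
For `y` in the ball of radius `λ₂ / (C₁ C₂²)`, the argument `x + G y` of `Q` lies in the ball
of radius `r = (λ₁ + λ₂) / (C₁ C₂)`. Hence `‖T_x y‖ ≤ ‖c‖ + C₁ r² ≤ (λ₀ + (λ₁ + λ₂)²) / (C₁ C₂²)`,
which is at most `λ₂ / (C₁ C₂²)`, and `T_x` is Lipschitz with constant `2 C₁ r C₂ = 2 (λ₁ + λ₂)`.
-/

section QuadraticRemainder

variable {E F : Type*} [NormedAddCommGroup E] [NormedAddCommGroup F] {Q : E → F} {C : ℝ}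

theorem norm_le_mul_sq_of_quadratic_remainder
    (hQ : ∀ a b : E, ‖Q a - Q b‖ ≤ C * (‖a‖ + ‖b‖) * ‖a - b‖) (hQ0 : Q 0 = 0) (a : E) :
    ‖Q a‖ ≤ C * ‖a‖ ^ 2 := by
  simpa [hQ0, sq, mul_assoc] using hQ a 0

theorem norm_sub_le_of_quadratic_remainder
    (hQ : ∀ a b : E, ‖Q a - Q b‖ ≤ C * (‖a‖ + ‖b‖) * ‖a - b‖) (hC : 0 ≤ C)
    {r : ℝ} {a b : E} (ha : ‖a‖ ≤ r) (hb : ‖b‖ ≤ r) :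
    ‖Q a - Q b‖ ≤ 2 * C * r * ‖a - b‖ :=
  calc ‖Q a - Q b‖ ≤ C * (‖a‖ + ‖b‖) * ‖a - b‖ := hQ a b
    _ ≤ C * (r + r) * ‖a - b‖ := by gcongr
    _ = 2 * C * r * ‖a - b‖ := by ring

end QuadraticRemainder

theorem contraction_Tx_general
    {E F : Type*} [NormedAddCommGroup E] [NormedSpace ℝ E]
    [NormedAddCommGroup F] [NormedSpace ℝ F]
    (G : F →L[ℝ] E) (Q : E → F) (c : F)
    (C₁ C₂ lam₀ lam₁ lam₂ : ℝ)
    (hC₁ : 0 < C₁) (hC₂ : 0 < C₂)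
    (hGnorm : ‖G‖ ≤ C₂)
    (hQ0 : Q 0 = 0)
    (hQ : ∀ a b : E, ‖Q a - Q b‖ ≤ C₁ * (‖a‖ + ‖b‖) * ‖a - b‖)
    (hsum : lam₀ + (lam₁ + lam₂) ^ 2 ≤ lam₂)
    (hc : ‖c‖ ≤ lam₀ / (C₁ * C₂ ^ 2))
    (x : E) (hxn : ‖x‖ ≤ lam₁ / (C₁ * C₂)) :
    (∀ y : F, ‖y‖ ≤ lam₂ / (C₁ * C₂ ^ 2) →
      ‖-c - Q (x + G y)‖ ≤ lam₂ / (C₁ * C₂ ^ 2)) ∧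
    (∀ y y' : F, ‖y‖ ≤ lam₂ / (C₁ * C₂ ^ 2) → ‖y'‖ ≤ lam₂ / (C₁ * C₂ ^ 2) →
      ‖(-c - Q (x + G y)) - (-c - Q (x + G y'))‖ ≤
        2 * (lam₁ + lam₂) * ‖y - y'‖) := by
  set r := (lam₁ + lam₂) / (C₁ * C₂) with hr_def
  have hG (y : F) : ‖G y‖ ≤ C₂ * ‖y‖ := G.le_of_opNorm_le hGnorm y
  have harg (y : F) (hy : ‖y‖ ≤ lam₂ / (C₁ * C₂ ^ 2)) : ‖x + G y‖ ≤ r :=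
    calc ‖x + G y‖ ≤ ‖x‖ + C₂ * ‖y‖ := (norm_add_le _ _).trans (by gcongr; exact hG y)
      _ ≤ lam₁ / (C₁ * C₂) + C₂ * (lam₂ / (C₁ * C₂ ^ 2)) := by gcongr
      _ = r := by rw [hr_def]; field_simp
  refine ⟨fun y hy => ?_, fun y y' hy hy' => ?_⟩
  · calc ‖-c - Q (x + G y)‖ ≤ ‖c‖ + C₁ * r ^ 2 := by
          refine (norm_sub_le _ _).trans ?_
          rw [norm_neg]
          grw [norm_le_mul_sq_of_quadratic_remainder hQ hQ0, harg y hy]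
      _ ≤ lam₀ / (C₁ * C₂ ^ 2) + (lam₁ + lam₂) ^ 2 / (C₁ * C₂ ^ 2) := by
          rw [show C₁ * r ^ 2 = (lam₁ + lam₂) ^ 2 / (C₁ * C₂ ^ 2) by rw [hr_def]; field_simp]
          gcongr
      _ ≤ lam₂ / (C₁ * C₂ ^ 2) := by rw [← add_div]; gcongr
  · have hr : 0 ≤ r := (norm_nonneg _).trans (harg y hy)
    rw [sub_sub_sub_cancel_left]
    calc ‖Q (x + G y') - Q (x + G y)‖ ≤ 2 * C₁ * r * ‖(x + G y') - (x + G y)‖ :=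
          norm_sub_le_of_quadratic_remainder hQ hC₁.le (harg y' hy') (harg y hy)
      _ ≤ 2 * C₁ * r * (C₂ * ‖y' - y‖) := by
          rw [add_sub_add_left_eq_sub, ← map_sub]
          gcongr
          exact hG _
      _ = 2 * (lam₁ + lam₂) * ‖y - y'‖ := by rw [norm_sub_rev, hr_def]; field_simp

/-- The map `T_x y = −c − Q(x + G y)` sends the closed ball of radius
λ₂/(C₁C₂²) in F into itself and is Lipschitz there with constant
2(λ₁ + λ₂) < 1, hence a contraction. -/
theorem contraction_Tx
    {E F : Type*} [NormedAddCommGroup E] [NormedSpace ℝ E] [CompleteSpace E]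
    [NormedAddCommGroup F] [NormedSpace ℝ F] [CompleteSpace F]
    (S : E →L[ℝ] F) (G : F →L[ℝ] E) (Q : E → F) (c : F)
    (C₁ C₂ lam₀ lam₁ lam₂ : ℝ)
    (hC₁ : 0 < C₁) (hC₂ : 0 < C₂)
    (hSG : ∀ y : F, S (G y) = y) (hGnorm : ‖G‖ ≤ C₂)
    (hQ0 : Q 0 = 0)
    (hQ : ∀ a b : E, ‖Q a - Q b‖ ≤ C₁ * (‖a‖ + ‖b‖) * ‖a - b‖)
    (hl₀ : 0 < lam₀) (hl₁ : 0 < lam₁) (hl₂ : 0 < lam₂)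
    (hsum : lam₀ + (lam₁ + lam₂) ^ 2 ≤ lam₂)
    (hhalf : lam₁ + lam₂ < 1 / 2)
    (hc : ‖c‖ ≤ lam₀ / (C₁ * C₂ ^ 2))
    (x : E) (hx : S x = 0) (hxn : ‖x‖ ≤ lam₁ / (C₁ * C₂)) :
    (∀ y : F, ‖y‖ ≤ lam₂ / (C₁ * C₂ ^ 2) →
      ‖-c - Q (x + G y)‖ ≤ lam₂ / (C₁ * C₂ ^ 2)) ∧
    (∀ y y' : F, ‖y‖ ≤ lam₂ / (C₁ * C₂ ^ 2) → ‖y'‖ ≤ lam₂ / (C₁ * C₂ ^ 2) →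
      ‖(-c - Q (x + G y)) - (-c - Q (x + G y'))‖ ≤
        2 * (lam₁ + lam₂) * ‖y - y'‖) :=
  contraction_Tx_general G Q c C₁ C₂ lam₀ lam₁ lam₂ hC₁ hC₂ hGnorm hQ0 hQ hsum hc x hxn
end

section
/- With E, F, S, G, Q, c, C₁, C₂, λ₀, λ₁, λ₂, x and T_x as in the context, there exists a unique y in the closed ball B̄ = { y ∈ F : ‖y‖ ≤ λ₂/(C₁C₂²) } with y = −c − Q(x + G y). For this y one has c + S(x + G y) + Q(x + G y) = 0 (so x + G y is a zero of the map a ↦ c + S a + Q(a)), and ‖y‖ ≤ (‖c‖ + C₁‖x‖²)/(1 − 2(λ₁ + λ₂)). -/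
/-!
Writing `a = x + G y` with `S x = 0` turns `c + S a + Q a = 0` into the fixed-point equation
`y = -c - Q (x + G y)`, because `S (G y) = y`. On the ball of radius `λ₂ / (C₁ C₂²)` the quadratic
bound `‖Q a‖ ≤ C₁ ‖a‖²` and `λ₀ + (λ₁ + λ₂)² ≤ λ₂` keep this map inside the ball, and the local
Lipschitz bound on `Q` makes it a contraction with constant `2 (λ₁ + λ₂) < 1`, so the Banach fixed
point theorem applies. Comparing the fixed point with the image of `0` gives the norm estimate.
-/

open Metric Set Function NNReal

section FixedPoint

variable {α : Type*} [MetricSpace α] {f : α → α} {s : Set α} {K : ℝ≥0}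

theorem exists_unique_isFixedPt_of_lipschitzOnWith (hsc : IsComplete s) (hne : s.Nonempty)
    (hsf : MapsTo f s s) (hK : K < 1) (hf : LipschitzOnWith K f s) :
    ∃! y, y ∈ s ∧ IsFixedPt f y := by
  have hcontr : ContractingWith K (hsf.restrict f s s) := ⟨hK, hf.mapsToRestrict hsf⟩
  obtain ⟨x, hx⟩ := hne
  obtain ⟨y, hys, hy, -⟩ := hcontr.exists_fixedPoint' hsc hsf hx (edist_ne_top _ _)
  refine ⟨y, ⟨hys, hy⟩, fun z ⟨hzs, hz⟩ => ?_⟩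
  exact congrArg Subtype.val
    (hcontr.fixedPoint_unique' (x := ⟨z, hzs⟩) (y := ⟨y, hys⟩) (Subtype.ext hz) (Subtype.ext hy))

theorem LipschitzOnWith.dist_le_of_isFixedPt (hK : K < 1) (hf : LipschitzOnWith K f s)
    {x y : α} (hx : x ∈ s) (hy : y ∈ s) (hfy : IsFixedPt f y) :
    dist x y ≤ dist x (f x) / (1 - K) := by
  have hK' : (K : ℝ) < 1 := hK
  rw [le_div_iff₀ (sub_pos.mpr hK')]
  have hstep := hf.dist_le_mul x hx y hy
  rw [hfy.eq] at hstep
  linarith [dist_triangle x (f x) y]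

end FixedPoint

theorem norm_le_mul_sq_of_norm_sub_le {E F : Type*} [SeminormedAddCommGroup E]
    [SeminormedAddCommGroup F] {Q : E → F} {C₁ : ℝ} (hQ0 : Q 0 = 0)
    (hQ : ∀ a b : E, ‖Q a - Q b‖ ≤ C₁ * (‖a‖ + ‖b‖) * ‖a - b‖) (a : E) :
    ‖Q a‖ ≤ C₁ * ‖a‖ ^ 2 := by
  simpa [hQ0, sq, mul_assoc] using hQ a 0

section Correction

variable {E F : Type*} [NormedAddCommGroup E] [NormedSpace ℝ E]
  [NormedAddCommGroup F] [NormedSpace ℝ F] {Q : E → F} {C₁ : ℝ}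

theorem norm_sub_comp_add_le (hC₁ : 0 ≤ C₁)
    (hQ : ∀ a b : E, ‖Q a - Q b‖ ≤ C₁ * (‖a‖ + ‖b‖) * ‖a - b‖)
    (G : F →L[ℝ] E) (x : E) (y z : F) :
    ‖Q (x + G y) - Q (x + G z)‖ ≤ C₁ * ‖G‖ * (‖x + G y‖ + ‖x + G z‖) * ‖y - z‖ := by
  have hdiff : x + G y - (x + G z) = G (y - z) := by rw [map_sub]; abel
  calc ‖Q (x + G y) - Q (x + G z)‖
      ≤ C₁ * (‖x + G y‖ + ‖x + G z‖) * ‖G (y - z)‖ := hdiff ▸ hQ _ _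
    _ ≤ C₁ * (‖x + G y‖ + ‖x + G z‖) * (‖G‖ * ‖y - z‖) := by gcongr; exact G.le_opNorm _
    _ = C₁ * ‖G‖ * (‖x + G y‖ + ‖x + G z‖) * ‖y - z‖ := by ring

theorem mul_norm_add_apply_le {C₂ lam₁ lam₂ : ℝ} (hC₁ : 0 < C₁) (hC₂ : 0 < C₂)
    {G : F →L[ℝ] E} (hGnorm : ‖G‖ ≤ C₂) {x : E} (hxn : ‖x‖ ≤ lam₁ / (C₁ * C₂))
    {y : F} (hy : ‖y‖ ≤ lam₂ / (C₁ * C₂ ^ 2)) :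
    C₁ * C₂ * ‖x + G y‖ ≤ lam₁ + lam₂ := by
  have hx' : C₁ * C₂ * ‖x‖ ≤ lam₁ := by rwa [le_div_iff₀ (by positivity), mul_comm] at hxn
  have hy' : C₁ * C₂ ^ 2 * ‖y‖ ≤ lam₂ := by rwa [le_div_iff₀ (by positivity), mul_comm] at hy
  have hGy : ‖G y‖ ≤ C₂ * ‖y‖ :=
    (G.le_opNorm y).trans (mul_le_mul_of_nonneg_right hGnorm (norm_nonneg y))
  calc C₁ * C₂ * ‖x + G y‖ ≤ C₁ * C₂ * (‖x‖ + C₂ * ‖y‖) := by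
        gcongr; exact (norm_add_le _ _).trans (by linarith)
    _ = C₁ * C₂ * ‖x‖ + C₁ * C₂ ^ 2 * ‖y‖ := by ring
    _ ≤ lam₁ + lam₂ := by linarith

/-- The map `T_x` of the paper. -/
def correctionMap (Q : E → F) (G : F →L[ℝ] E) (c : F) (x : E) (y : F) : F :=
  -c - Q (x + G y)

variable {C₂ lam₀ lam₁ lam₂ : ℝ} {G : F →L[ℝ] E} {c : F} {x : E}

theorem mapsTo_correctionMap_closedBall (hC₁ : 0 < C₁) (hC₂ : 0 < C₂) (hGnorm : ‖G‖ ≤ C₂)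
    (hQ0 : Q 0 = 0) (hQ : ∀ a b : E, ‖Q a - Q b‖ ≤ C₁ * (‖a‖ + ‖b‖) * ‖a - b‖)
    (hsum : lam₀ + (lam₁ + lam₂) ^ 2 ≤ lam₂) (hc : ‖c‖ ≤ lam₀ / (C₁ * C₂ ^ 2))
    (hxn : ‖x‖ ≤ lam₁ / (C₁ * C₂)) :
    MapsTo (correctionMap Q G c x) (closedBall 0 (lam₂ / (C₁ * C₂ ^ 2)))
      (closedBall 0 (lam₂ / (C₁ * C₂ ^ 2))) := by
  intro y hy
  rw [mem_closedBall_zero_iff] at hy ⊢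
  have hCC : 0 < C₁ * C₂ ^ 2 := by positivity
  have hc' : C₁ * C₂ ^ 2 * ‖c‖ ≤ lam₀ := by rwa [le_div_iff₀ hCC, mul_comm] at hc
  have harg := mul_norm_add_apply_le hC₁ hC₂ hGnorm hxn hy
  have hsq : (C₁ * C₂ * ‖x + G y‖) ^ 2 ≤ (lam₁ + lam₂) ^ 2 :=
    pow_le_pow_left₀ (by positivity) harg 2
  rw [le_div_iff₀ hCC]
  calc ‖correctionMap Q G c x y‖ * (C₁ * C₂ ^ 2)
      ≤ (‖c‖ + C₁ * ‖x + G y‖ ^ 2) * (C₁ * C₂ ^ 2) := by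
        gcongr
        exact (norm_sub_le _ _).trans
          (by rw [norm_neg]; linarith [norm_le_mul_sq_of_norm_sub_le hQ0 hQ (x + G y)])
    _ = C₁ * C₂ ^ 2 * ‖c‖ + (C₁ * C₂ * ‖x + G y‖) ^ 2 := by ring
    _ ≤ lam₂ := by linarith

theorem lipschitzOnWith_correctionMap (hC₁ : 0 < C₁) (hC₂ : 0 < C₂) (hGnorm : ‖G‖ ≤ C₂)
    (hQ : ∀ a b : E, ‖Q a - Q b‖ ≤ C₁ * (‖a‖ + ‖b‖) * ‖a - b‖)
    (hxn : ‖x‖ ≤ lam₁ / (C₁ * C₂)) :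
    LipschitzOnWith (2 * (lam₁ + lam₂)).toNNReal (correctionMap Q G c x)
      (closedBall 0 (lam₂ / (C₁ * C₂ ^ 2))) := by
  refine LipschitzOnWith.of_dist_le' fun y hy z hz => ?_
  rw [mem_closedBall_zero_iff] at hy hz
  have hy' := mul_norm_add_apply_le hC₁ hC₂ hGnorm hxn hy
  have hz' := mul_norm_add_apply_le hC₁ hC₂ hGnorm hxn hz
  rw [dist_eq_norm, dist_eq_norm, correctionMap, correctionMap, sub_sub_sub_cancel_left]
  calc ‖Q (x + G z) - Q (x + G y)‖
      ≤ C₁ * ‖G‖ * (‖x + G z‖ + ‖x + G y‖) * ‖z - y‖ := norm_sub_comp_add_le hC₁.le hQ G x z y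
    _ ≤ C₁ * C₂ * (‖x + G z‖ + ‖x + G y‖) * ‖z - y‖ := by gcongr
    _ ≤ 2 * (lam₁ + lam₂) * ‖y - z‖ := by
        rw [norm_sub_rev]
        exact mul_le_mul_of_nonneg_right (by linarith) (norm_nonneg _)

end Correction

theorem fixed_point_Tx_general
    {E F : Type*} [NormedAddCommGroup E] [NormedSpace ℝ E]
    [NormedAddCommGroup F] [NormedSpace ℝ F] [CompleteSpace F]
    (S : E →L[ℝ] F) (G : F →L[ℝ] E) (Q : E → F) (c : F)
    (C₁ C₂ lam₀ lam₁ lam₂ : ℝ)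
    (hC₁ : 0 < C₁) (hC₂ : 0 < C₂)
    (hSG : ∀ y : F, S (G y) = y) (hGnorm : ‖G‖ ≤ C₂)
    (hQ0 : Q 0 = 0)
    (hQ : ∀ a b : E, ‖Q a - Q b‖ ≤ C₁ * (‖a‖ + ‖b‖) * ‖a - b‖)
    (hl₁ : 0 < lam₁) (hl₂ : 0 < lam₂)
    (hsum : lam₀ + (lam₁ + lam₂) ^ 2 ≤ lam₂)
    (hhalf : lam₁ + lam₂ < 1 / 2)
    (hc : ‖c‖ ≤ lam₀ / (C₁ * C₂ ^ 2))
    (x : E) (hx : S x = 0) (hxn : ‖x‖ ≤ lam₁ / (C₁ * C₂)) :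
    ∃ y : F, (‖y‖ ≤ lam₂ / (C₁ * C₂ ^ 2) ∧ y = -c - Q (x + G y)) ∧
      (∀ z : F, ‖z‖ ≤ lam₂ / (C₁ * C₂ ^ 2) → z = -c - Q (x + G z) → z = y) ∧
      c + S (x + G y) + Q (x + G y) = 0 ∧
      ‖y‖ ≤ (‖c‖ + C₁ * ‖x‖ ^ 2) / (1 - 2 * (lam₁ + lam₂)) := by
  have h0 : (0 : F) ∈ closedBall 0 (lam₂ / (C₁ * C₂ ^ 2)) := mem_closedBall_self (by positivity)
  have hK : (2 * (lam₁ + lam₂)).toNNReal < 1 := by rw [Real.toNNReal_lt_one]; linarith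
  have hmaps := mapsTo_correctionMap_closedBall hC₁ hC₂ hGnorm hQ0 hQ hsum hc hxn
  have hlip := lipschitzOnWith_correctionMap (lam₂ := lam₂) (c := c) hC₁ hC₂ hGnorm hQ hxn
  obtain ⟨y, ⟨hy, hfix⟩, huniq⟩ := exists_unique_isFixedPt_of_lipschitzOnWith
    isClosed_closedBall.isComplete ⟨0, h0⟩ hmaps hK hlip
  refine ⟨y, ⟨mem_closedBall_zero_iff.mp hy, hfix.symm⟩,
    fun z hz hzfix => huniq z ⟨mem_closedBall_zero_iff.mpr hz, hzfix.symm⟩, ?_, ?_⟩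
  · have hS : S (x + G y) = y := by rw [map_add, hx, hSG, zero_add]
    rw [hS]
    nth_rewrite 1 [← hfix]
    rw [correctionMap]
    abel
  · have hdist := hlip.dist_le_of_isFixedPt hK h0 hy hfix
    rw [dist_zero_left, dist_zero_left, Real.coe_toNNReal _ (by positivity)] at hdist
    refine hdist.trans (div_le_div_of_nonneg_right ?_ (by linarith))
    calc ‖correctionMap Q G c x 0‖ ≤ ‖c‖ + ‖Q x‖ := by
          simpa [correctionMap] using norm_sub_le (-c) (Q x)
      _ ≤ ‖c‖ + C₁ * ‖x‖ ^ 2 := by gcongr; exact norm_le_mul_sq_of_norm_sub_le hQ0 hQ x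

/-- There is a unique fixed point `y = T_x y = −c − Q(x + G y)` in the closed
ball of radius λ₂/(C₁C₂²); for this y, `x + G y` is a zero of
`a ↦ c + S a + Q a`, and ‖y‖ ≤ (‖c‖ + C₁‖x‖²)/(1 − 2(λ₁ + λ₂)). -/
theorem fixed_point_Tx
    {E F : Type*} [NormedAddCommGroup E] [NormedSpace ℝ E] [CompleteSpace E]
    [NormedAddCommGroup F] [NormedSpace ℝ F] [CompleteSpace F]
    (S : E →L[ℝ] F) (G : F →L[ℝ] E) (Q : E → F) (c : F)
    (C₁ C₂ lam₀ lam₁ lam₂ : ℝ)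
    (hC₁ : 0 < C₁) (hC₂ : 0 < C₂)
    (hSG : ∀ y : F, S (G y) = y) (hGnorm : ‖G‖ ≤ C₂)
    (hQ0 : Q 0 = 0)
    (hQ : ∀ a b : E, ‖Q a - Q b‖ ≤ C₁ * (‖a‖ + ‖b‖) * ‖a - b‖)
    (hl₀ : 0 < lam₀) (hl₁ : 0 < lam₁) (hl₂ : 0 < lam₂)
    (hsum : lam₀ + (lam₁ + lam₂) ^ 2 ≤ lam₂)
    (hhalf : lam₁ + lam₂ < 1 / 2)
    (hc : ‖c‖ ≤ lam₀ / (C₁ * C₂ ^ 2))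
    (x : E) (hx : S x = 0) (hxn : ‖x‖ ≤ lam₁ / (C₁ * C₂)) :
    ∃ y : F, (‖y‖ ≤ lam₂ / (C₁ * C₂ ^ 2) ∧ y = -c - Q (x + G y)) ∧
      (∀ z : F, ‖z‖ ≤ lam₂ / (C₁ * C₂ ^ 2) → z = -c - Q (x + G z) → z = y) ∧
      c + S (x + G y) + Q (x + G y) = 0 ∧
      ‖y‖ ≤ (‖c‖ + C₁ * ‖x‖ ^ 2) / (1 - 2 * (lam₁ + lam₂)) :=
  fixed_point_Tx_general S G Q c C₁ C₂ lam₀ lam₁ lam₂ hC₁ hC₂ hSG hGnorm hQ0 hQ hl₁ hl₂ hsum hhalf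
    hc x hx hxn
end

section
/- With the data of the context, there exist constants C > 0 and R₀ > 0 such that for all R ≥ R₀ and all θ ∈ [0, π/2], ‖v₂(R, θ) − [(cos 2θ / 2)·w_{k+1} − (1/2)·∑_{j=0}^{k} w_j]‖ ≤ C·R⁻². -/
/-!
Write `s = sin 2θ / R²`, `c = cos 2θ / R²`, so that `s² + c² = R⁻⁴`. Since `y_{k+1} = 0`, the last
summand of `v₂` is exactly `(cos 2θ / 2) w_{k+1}`. For `j ≤ k` we have `y_j ≥ y_k > 0`, so once
`R⁻² ≤ y_k / 2` the number `a = c - y_j` stays `≤ -y_k / 2`, and then with `r = √(s² + a²)`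
the identity `a / r + 1 = s² / (r (r - a))` shows that the coefficient of `w_j` is `-1 + O(s²)`,
i.e. `-1 + O(R⁻⁴)`.
-/

open Finset Real

lemma abs_div_sqrt_sq_add_sq_add_one_le (t : ℝ) {a b : ℝ} (hb : 0 < b) (ha : a ≤ -b) :
    |a / √(t ^ 2 + a ^ 2) + 1| ≤ t ^ 2 / (2 * b ^ 2) := by
  set r := √(t ^ 2 + a ^ 2)
  have hr_sq : r ^ 2 = t ^ 2 + a ^ 2 := sq_sqrt (by positivity)
  have hr_ge : -a ≤ r := by
    rw [← abs_of_neg (by linarith : a < 0), ← sqrt_sq_eq_abs]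
    exact sqrt_le_sqrt (by nlinarith)
  have hr_pos : 0 < r := by linarith
  have hra_pos : 0 < r - a := by linarith
  have h_eq : a / r + 1 = t ^ 2 / (r * (r - a)) := by
    rw [div_add_one hr_pos.ne', div_eq_div_iff hr_pos.ne' (by positivity)]
    linear_combination r * hr_sq
  rw [h_eq, abs_of_nonneg (by positivity)]
  exact div_le_div_of_nonneg_left (sq_nonneg t) (by positivity) (by nlinarith)

lemma norm_sum_smul_le_of_abs_le {ι E : Type*} [SeminormedAddCommGroup E] [NormedSpace ℝ E]
    (s : Finset ι) (c : ι → ℝ) (w : ι → E) {ε : ℝ} (hc : ∀ j ∈ s, |c j| ≤ ε) :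
    ‖∑ j ∈ s, c j • w j‖ ≤ ε * ∑ j ∈ s, ‖w j‖ := by
  rw [mul_sum]
  refine norm_sum_le_of_le s fun j hj => ?_
  rw [norm_smul, norm_eq_abs]
  exact mul_le_mul_of_nonneg_right (hc j hj) (norm_nonneg _)

lemma cos_div_div_sqrt_sin_div_sq_add_cos_div_sq (φ : ℝ) {ρ : ℝ} (hρ : 0 < ρ) :
    cos φ / ρ / √((sin φ / ρ) ^ 2 + (cos φ / ρ) ^ 2) = cos φ := by
  have h : (sin φ / ρ) ^ 2 + (cos φ / ρ) ^ 2 = (1 / ρ) ^ 2 := by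
    field_simp
    exact sin_sq_add_cos_sq φ
  rw [h, sqrt_sq (by positivity)]
  field_simp

lemma half_smul_sum_range_succ_succ_sub {E : Type*} [AddCommGroup E] [Module ℝ E] (k : ℕ)
    (f : ℕ → ℝ) (w : ℕ → E) {a : ℝ} (hf : f (k + 1) = a) :
    (1 / 2 : ℝ) • ∑ j ∈ range (k + 2), f j • w j -
        ((a / 2) • w (k + 1) - (1 / 2 : ℝ) • ∑ j ∈ range (k + 1), w j) =
      (1 / 2 : ℝ) • ∑ j ∈ range (k + 1), (f j + 1) • w j := by
  simp only [sum_range_succ _ (k + 1), hf, add_smul, one_smul, sum_add_distrib]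
  module

lemma abs_cos_div_sub_div_sqrt_add_one_le (φ : ℝ) {m R b : ℝ} (hm : 0 < m) (hR : 1 ≤ R)
    (hR_sq : 1 / R ^ 2 ≤ m / 2) (hb : m ≤ b) :
    |(cos φ / R ^ 2 - b) / √((sin φ / R ^ 2) ^ 2 + (cos φ / R ^ 2 - b) ^ 2) + 1| ≤
      2 / (m ^ 2 * R ^ 2) := by
  have hcos : cos φ / R ^ 2 ≤ 1 / R ^ 2 := by gcongr; exact cos_le_one φ
  have hsin : (sin φ / R ^ 2) ^ 2 ≤ 1 / R ^ 2 :=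
    calc (sin φ / R ^ 2) ^ 2 = sin φ ^ 2 / R ^ 4 := by ring
      _ ≤ 1 / R ^ 4 := by gcongr; exact sin_sq_le_one φ
      _ ≤ 1 / R ^ 2 := by gcongr; norm_num
  calc _ ≤ (sin φ / R ^ 2) ^ 2 / (2 * (m / 2) ^ 2) :=
        abs_div_sqrt_sq_add_sq_add_one_le _ (half_pos hm) (by linarith)
    _ ≤ 1 / R ^ 2 / (2 * (m / 2) ^ 2) := by gcongr
    _ = 2 / (m ^ 2 * R ^ 2) := by field_simp

/-- Asymptotics of v₂:
v₂(R,θ) = (cos 2θ / 2)·w_{k+1} − (1/2)·∑_{j=0}^k w_j + O(R⁻²) uniformly in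
θ ∈ [0, π/2]. -/
theorem v2_asymptotics (k : ℕ) (y : ℕ → ℝ)
    (hy_pos : 0 < y k) (hy_dec : ∀ i, i < k → y (i + 1) < y i)
    (hy_last : y (k + 1) = 0)
    (w : ℕ → ℝ × ℝ)
    (v₂ : ℝ → ℝ → ℝ × ℝ)
    (hv₂ : ∀ R θ : ℝ, v₂ R θ =
      (1 / 2 : ℝ) •
        ∑ j ∈ Finset.range (k + 2),
          ((Real.cos (2 * θ) / R ^ 2 - y j) /
            Real.sqrt ((Real.sin (2 * θ) / R ^ 2) ^ 2 +
              (Real.cos (2 * θ) / R ^ 2 - y j) ^ 2)) • w j) :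
    ∃ C > (0 : ℝ), ∃ R₀ > (0 : ℝ), ∀ R : ℝ, R₀ ≤ R →
      ∀ θ ∈ Set.Icc (0 : ℝ) (Real.pi / 2),
        ‖v₂ R θ - ((Real.cos (2 * θ) / 2) • w (k + 1) -
          (1 / 2 : ℝ) • ∑ j ∈ Finset.range (k + 1), w j)‖ ≤ C / R ^ 2 := by
  set m := y k
  have hy_ge : ∀ j ≤ k, m ≤ y j := fun j hj =>
    (strictAntiOn_Iic_of_succ_lt (fun i hi => by simpa using hy_dec i hi)).antitoneOn
      (Set.mem_Iic.2 hj) (Set.mem_Iic.2 le_rfl) hj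
  set S := ∑ j ∈ range (k + 1), ‖w j‖
  refine ⟨S / m ^ 2 + 1, by positivity, 1 + 2 / m, by positivity, fun R hR θ _ => ?_⟩
  have hR : 1 ≤ R := by linarith [show 0 < 2 / m by positivity]
  have hR_sq : 1 / R ^ 2 ≤ m / 2 :=
    calc 1 / R ^ 2 ≤ 1 / R := by gcongr; exact le_self_pow₀ hR two_ne_zero
      _ ≤ m / 2 := (one_div_le (by positivity) (by positivity)).2 (by rw [one_div_div]; linarith)
  rw [hv₂, half_smul_sum_range_succ_succ_sub k _ w (by
    rw [hy_last, sub_zero, cos_div_div_sqrt_sin_div_sq_add_cos_div_sq _ (by positivity)])]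
  calc ‖(1 / 2 : ℝ) • ∑ j ∈ range (k + 1), _‖
      ≤ 1 / 2 * (2 / (m ^ 2 * R ^ 2) * S) := by
        rw [norm_smul, Real.norm_of_nonneg (by norm_num)]
        gcongr
        exact norm_sum_smul_le_of_abs_le _ _ _ fun j hj =>
          abs_cos_div_sub_div_sqrt_add_one_le _ hy_pos hR hR_sq (hy_ge j (mem_range_succ_iff.1 hj))
    _ = S / m ^ 2 / R ^ 2 := by field_simp
    _ ≤ (S / m ^ 2 + 1) / R ^ 2 := by gcongr; linarith
end

section
/- With the data of the context, there exist constants C > 0 and R₀ > 0 such that for all R ≥ R₀ and all θ ∈ [0, π/2], |⟨v₁(R,θ), v₂(R,θ)⟩ + (sin 2θ / 4)·⟨w_{k+1}, ∑_{j=0}^{k} w_j⟩| ≤ C·R⁻². -/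
/-!
The pole `y_{k+1} = 0` lies at distance exactly `R⁻²` from the point `R⁻² (sin 2θ, cos 2θ)`,
so its terms in `v₁` and `v₂` are `(sin 2θ / 2) w_{k+1}` and `(cos 2θ / 2) w_{k+1}`. Once
`R⁻² ≤ y_k / 2`, the other poles stay at distance at least `y_k / 2`: their terms in `v₁` are
`O(R⁻²)`, and in `v₂` each quotient `(y - y_j) / |(x, y - y_j)|` is `-1 + O(R⁻²)`. Thus, up to
`O(R⁻²)`, `v₁ = (sin 2θ / 2) w_{k+1}` and `v₂ = (cos 2θ / 2) w_{k+1} - ½ ∑_{j ≤ k} w_j`, and since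
`⟨w_{k+1}, w_{k+1}⟩ = 0` the pairing is `-(sin 2θ / 4) ⟨w_{k+1}, ∑_{j ≤ k} w_j⟩ + O(R⁻²)`.
-/
def symp (u v : ℝ × ℝ) : ℝ := u.1 * v.2 - u.2 * v.1

open Finset Real

lemma abs_symp_le (p q : ℝ × ℝ) : |symp p q| ≤ 2 * ‖p‖ * ‖q‖ := by
  have h₁ : |p.1| ≤ ‖p‖ := norm_fst_le p
  have h₂ : |p.2| ≤ ‖p‖ := norm_snd_le p
  have h₃ : |q.1| ≤ ‖q‖ := norm_fst_le q
  have h₄ : |q.2| ≤ ‖q‖ := norm_snd_le q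
  calc |symp p q| ≤ |p.1| * |q.2| + |p.2| * |q.1| := by
        rw [symp, ← abs_mul, ← abs_mul]; exact abs_sub _ _
    _ ≤ ‖p‖ * ‖q‖ + ‖p‖ * ‖q‖ := by gcongr
    _ = 2 * ‖p‖ * ‖q‖ := by ring

lemma abs_symp_add_add_sub_le {p q a b : ℝ × ℝ} {N δ : ℝ} (hp : ‖p‖ ≤ N) (hq : ‖q‖ ≤ N)
    (ha : ‖a‖ ≤ δ) (hb : ‖b‖ ≤ δ) :
    |symp (p + a) (q + b) - symp p q| ≤ 2 * δ * (2 * N + δ) := by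
  have hexp : symp (p + a) (q + b) - symp p q = symp p b + symp a q + symp a b := by
    simp only [symp, Prod.fst_add, Prod.snd_add]; ring
  calc |symp (p + a) (q + b) - symp p q|
      ≤ |symp p b| + |symp a q| + |symp a b| := hexp ▸ abs_add_three _ _ _
    _ ≤ 2 * ‖p‖ * ‖b‖ + 2 * ‖a‖ * ‖q‖ + 2 * ‖a‖ * ‖b‖ := by
        gcongr <;> exact abs_symp_le _ _
    _ ≤ 2 * N * δ + 2 * δ * N + 2 * δ * δ := by
        have := (norm_nonneg p).trans hp
        have := (norm_nonneg a).trans ha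
        gcongr
    _ = 2 * δ * (2 * N + δ) := by ring

lemma norm_sum_smul_le {ι E : Type*} [SeminormedAddCommGroup E] [NormedSpace ℝ E]
    (s : Finset ι) (c : ι → ℝ) (v : ι → E) {B : ℝ} (hc : ∀ i ∈ s, |c i| ≤ B) :
    ‖∑ i ∈ s, c i • v i‖ ≤ B * ∑ i ∈ s, ‖v i‖ := by
  rw [mul_sum]
  refine norm_sum_le_of_le s fun i hi => ?_
  rw [norm_smul, Real.norm_eq_abs]
  exact mul_le_mul_of_nonneg_right (hc i hi) (norm_nonneg _)

lemma sub_le_sqrt_sq_add_sq (x u a : ℝ) :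
    a - u ≤ √(x ^ 2 + (u - a) ^ 2) :=
  Real.le_sqrt_of_sq_le (by nlinarith [sq_nonneg x])

lemma inv_sqrt_sq_add_sq_le (x : ℝ) {u a : ℝ} (hua : u < a) :
    (√(x ^ 2 + (u - a) ^ 2))⁻¹ ≤ (a - u)⁻¹ :=
  inv_anti₀ (sub_pos.2 hua) (sub_le_sqrt_sq_add_sq x u a)

lemma abs_div_sqrt_sq_add_sq_add_one_le_s14 (x : ℝ) {u a : ℝ} (hua : u < a) :
    |(u - a) / √(x ^ 2 + (u - a) ^ 2) + 1| ≤ |x| / (a - u) := by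
  set r := √(x ^ 2 + (u - a) ^ 2)
  have hd : 0 < a - u := sub_pos.2 hua
  have hlow : a - u ≤ r := sub_le_sqrt_sq_add_sq x u a
  have hup : r ≤ |x| + (a - u) :=
    Real.sqrt_le_iff.2 ⟨by positivity, by nlinarith [sq_abs x, abs_nonneg x]⟩
  have hr : 0 < r := hd.trans_le hlow
  calc |(u - a) / r + 1| = (r - (a - u)) / r := by
        rw [abs_of_nonneg (by rw [div_add_one hr.ne']; exact div_nonneg (by linarith) hr.le)]
        field_simp; ring
    _ ≤ |x| / r := by gcongr; linarith
    _ ≤ |x| / (a - u) := by gcongr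

/-- `sumV₁ y w n x u` and `sumV₂ y w n x u` are `v₁` and `v₂` at the point `(x, y) = (x, u)`,
keeping only the poles `y₀, …, y_{n-1}`. -/
noncomputable def sumV₁ (y : ℕ → ℝ) (w : ℕ → ℝ × ℝ) (n : ℕ) (x u : ℝ) : ℝ × ℝ :=
  (x / 2) • ∑ j ∈ range n, (√(x ^ 2 + (u - y j) ^ 2))⁻¹ • w j

noncomputable def sumV₂ (y : ℕ → ℝ) (w : ℕ → ℝ × ℝ) (n : ℕ) (x u : ℝ) : ℝ × ℝ :=
  (1 / 2 : ℝ) • ∑ j ∈ range n, ((u - y j) / √(x ^ 2 + (u - y j) ^ 2)) • w j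

section FarFromPoles

variable {y : ℕ → ℝ} (w : ℕ → ℝ × ℝ) {n : ℕ} {m : ℝ} (x : ℝ) {u : ℝ}

lemma half_le_sub_of_le {j : ℕ} (hy : ∀ j < n, m ≤ y j) (hu : 2 * u ≤ m) (hj : j ∈ range n) :
    m / 2 ≤ y j - u := by
  have := hy j (mem_range.1 hj); linarith

lemma norm_sumV₁_le (hm : 0 < m) (hy : ∀ j < n, m ≤ y j) (hu : 2 * u ≤ m) :
    ‖sumV₁ y w n x u‖ ≤ |x| / m * ∑ j ∈ range n, ‖w j‖ := by
  have hcoef : ∀ j ∈ range n, |(√(x ^ 2 + (u - y j) ^ 2))⁻¹| ≤ 2 / m := fun j hj => by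
    have hd := half_le_sub_of_le hy hu hj
    rw [abs_of_nonneg (by positivity), ← inv_div]
    exact (inv_sqrt_sq_add_sq_le x (by linarith)).trans (inv_anti₀ (by positivity) hd)
  calc ‖sumV₁ y w n x u‖ ≤ |x / 2| * (2 / m * ∑ j ∈ range n, ‖w j‖) := by
        rw [sumV₁, norm_smul, Real.norm_eq_abs]
        gcongr
        exact norm_sum_smul_le _ _ _ hcoef
    _ = |x| / m * ∑ j ∈ range n, ‖w j‖ := by
        rw [abs_div, abs_two]; field_simp

lemma norm_sumV₂_add_le (hm : 0 < m) (hy : ∀ j < n, m ≤ y j) (hu : 2 * u ≤ m) :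
    ‖sumV₂ y w n x u + (1 / 2 : ℝ) • ∑ j ∈ range n, w j‖ ≤ |x| / m * ∑ j ∈ range n, ‖w j‖ := by
  have hcoef : ∀ j ∈ range n,
      |(u - y j) / √(x ^ 2 + (u - y j) ^ 2) + 1| ≤ 2 * |x| / m := fun j hj => by
    have hd := half_le_sub_of_le hy hu hj
    calc _ ≤ |x| / (y j - u) := abs_div_sqrt_sq_add_sq_add_one_le_s14 x (by linarith)
      _ ≤ |x| / (m / 2) := by gcongr
      _ = 2 * |x| / m := by ring
  calc ‖sumV₂ y w n x u + (1 / 2 : ℝ) • ∑ j ∈ range n, w j‖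
      = ‖(1 / 2 : ℝ) • ∑ j ∈ range n,
          ((u - y j) / √(x ^ 2 + (u - y j) ^ 2) + 1) • w j‖ := by
        simp only [sumV₂, add_smul, one_smul, sum_add_distrib, smul_add]
    _ ≤ 1 / 2 * (2 * |x| / m * ∑ j ∈ range n, ‖w j‖) := by
        rw [norm_smul, Real.norm_eq_abs, abs_of_pos one_half_pos]
        gcongr
        exact norm_sum_smul_le _ _ _ hcoef
    _ = |x| / m * ∑ j ∈ range n, ‖w j‖ := by ring

end FarFromPoles

lemma sqrt_sin_div_sq_add_cos_div_sq (φ : ℝ) {r : ℝ} (hr : 0 ≤ r) :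
    √((sin φ / r) ^ 2 + (cos φ / r) ^ 2) = r⁻¹ := by
  rw [div_pow, div_pow, ← add_div, sin_sq_add_cos_sq, one_div, ← inv_pow,
    Real.sqrt_sq (by positivity)]

section LastPole

variable {y : ℕ → ℝ} (w : ℕ → ℝ × ℝ) {n : ℕ} (hyn : y n = 0) (φ : ℝ) {r : ℝ} (hr : 0 < r)
include hyn hr

lemma sumV₁_succ_of_eq_zero :
    sumV₁ y w (n + 1) (sin φ / r) (cos φ / r) =
      (sin φ / 2) • w n + sumV₁ y w n (sin φ / r) (cos φ / r) := by
  rw [sumV₁, sum_range_succ, hyn, sub_zero, sqrt_sin_div_sq_add_cos_div_sq φ hr.le, inv_inv,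
    smul_add, smul_smul, add_comm, sumV₁]
  congr 2
  field_simp

lemma sumV₂_succ_of_eq_zero :
    sumV₂ y w (n + 1) (sin φ / r) (cos φ / r) =
      (cos φ / 2) • w n + sumV₂ y w n (sin φ / r) (cos φ / r) := by
  rw [sumV₂, sum_range_succ, hyn, sub_zero, sqrt_sin_div_sq_add_cos_div_sq φ hr.le, smul_add,
    smul_smul, add_comm, sumV₂]
  congr 2
  field_simp

end LastPole

lemma abs_symp_sumV₁_sumV₂_add_le {n : ℕ} {y : ℕ → ℝ} {m : ℝ} (hm : 0 < m)
    (hy : ∀ j < n, m ≤ y j) (hyn : y n = 0) {w : ℕ → ℝ × ℝ} {N : ℝ}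
    (hN : ‖w n‖ + ∑ j ∈ range n, ‖w j‖ ≤ N) (φ : ℝ) {r : ℝ} (hr : 1 ≤ r) (hmr : 2 ≤ m * r) :
    |symp (sumV₁ y w (n + 1) (sin φ / r) (cos φ / r)) (sumV₂ y w (n + 1) (sin φ / r) (cos φ / r)) +
        sin φ / 4 * symp (w n) (∑ j ∈ range n, w j)| ≤ 2 * (N / m) * (2 * N + N / m) / r := by
  set S := ∑ j ∈ range n, w j
  set M := ∑ j ∈ range n, ‖w j‖
  have hr0 : 0 < r := one_pos.trans_le hr
  have hM : 0 ≤ M := sum_nonneg fun _ _ => norm_nonneg _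
  have hwn := norm_nonneg (w n)
  have hS : ‖S‖ ≤ M := norm_sum_le _ _
  have habs_div (f : ℝ → ℝ) (hf : |f φ| ≤ 1) : |f φ / r| ≤ r⁻¹ := by
    rw [abs_div, abs_of_pos hr0, div_eq_mul_inv]
    exact mul_le_of_le_one_left (by positivity) hf
  have hx := habs_div sin (abs_sin_le_one φ)
  have hu : 2 * (cos φ / r) ≤ m := by
    have := (le_abs_self _).trans (habs_div cos (abs_cos_le_one φ))
    have : 2 * r⁻¹ ≤ m := by rw [← div_eq_mul_inv, div_le_iff₀ hr0]; exact hmr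
    linarith
  have hδ : |sin φ / r| / m * M ≤ N / m * r⁻¹ := by
    calc |sin φ / r| / m * M ≤ r⁻¹ / m * N := by gcongr; linarith
      _ = N / m * r⁻¹ := by ring
  set p := (sin φ / 2) • w n
  set q := (cos φ / 2) • w n - (1 / 2 : ℝ) • S
  have hp : ‖p‖ ≤ N := by
    rw [norm_smul, Real.norm_eq_abs, abs_div, abs_two]
    nlinarith [abs_sin_le_one φ, abs_nonneg (sin φ)]
  have hq : ‖q‖ ≤ N := by
    refine (norm_sub_le _ _).trans ?_
    rw [norm_smul, norm_smul, Real.norm_eq_abs, Real.norm_eq_abs,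
      abs_of_pos (one_half_pos (α := ℝ)), abs_div, abs_two]
    nlinarith [abs_cos_le_one φ, abs_nonneg (cos φ)]
  have hpq : symp p q = -(sin φ / 4 * symp (w n) S) := by
    simp only [p, q, symp, Prod.smul_fst, Prod.smul_snd, Prod.fst_sub, Prod.snd_sub, smul_eq_mul]
    ring
  have hv₂ : (cos φ / 2) • w n + sumV₂ y w n (sin φ / r) (cos φ / r) =
      q + (sumV₂ y w n (sin φ / r) (cos φ / r) + (1 / 2 : ℝ) • S) := by
    simp only [q]; abel
  rw [sumV₁_succ_of_eq_zero w hyn φ hr0, sumV₂_succ_of_eq_zero w hyn φ hr0, hv₂,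
    ← sub_neg_eq_add, ← hpq]
  calc _ ≤ 2 * (N / m * r⁻¹) * (2 * N + N / m * r⁻¹) :=
        abs_symp_add_add_sub_le hp hq ((norm_sumV₁_le w _ hm hy hu).trans hδ)
          ((norm_sumV₂_add_le w _ hm hy hu).trans hδ)
    _ ≤ 2 * (N / m * r⁻¹) * (2 * N + N / m * 1) := by
        have : 0 ≤ N := by linarith
        gcongr
        exact inv_le_one_of_one_le₀ hr
    _ = 2 * (N / m) * (2 * N + N / m) / r := by ring

/-- Asymptotics of the symplectic pairing:
⟨v₁, v₂⟩ = −(sin 2θ / 4)·⟨w_{k+1}, ∑_{j=0}^k w_j⟩ + O(R⁻²) uniformly in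
θ ∈ [0, π/2]. -/
theorem symp_v1_v2_asymptotics (k : ℕ) (y : ℕ → ℝ)
    (hy_pos : 0 < y k) (hy_dec : ∀ i, i < k → y (i + 1) < y i)
    (hy_last : y (k + 1) = 0)
    (w : ℕ → ℝ × ℝ)
    (v₁ v₂ : ℝ → ℝ → ℝ × ℝ)
    (hv₁ : ∀ R θ : ℝ, v₁ R θ =
      (Real.sin (2 * θ) / R ^ 2 / 2) •
        ∑ j ∈ Finset.range (k + 2),
          (Real.sqrt ((Real.sin (2 * θ) / R ^ 2) ^ 2 +
            (Real.cos (2 * θ) / R ^ 2 - y j) ^ 2))⁻¹ • w j)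
    (hv₂ : ∀ R θ : ℝ, v₂ R θ =
      (1 / 2 : ℝ) •
        ∑ j ∈ Finset.range (k + 2),
          ((Real.cos (2 * θ) / R ^ 2 - y j) /
            Real.sqrt ((Real.sin (2 * θ) / R ^ 2) ^ 2 +
              (Real.cos (2 * θ) / R ^ 2 - y j) ^ 2)) • w j) :
    ∃ C > (0 : ℝ), ∃ R₀ > (0 : ℝ), ∀ R : ℝ, R₀ ≤ R →
      ∀ θ ∈ Set.Icc (0 : ℝ) (Real.pi / 2),
        |symp (v₁ R θ) (v₂ R θ) +
          (Real.sin (2 * θ) / 4) *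
            symp (w (k + 1)) (∑ j ∈ Finset.range (k + 1), w j)| ≤ C / R ^ 2 := by
  have hy : ∀ j < k + 1, y k ≤ y j := fun j hj =>
    (strictAntiOn_Iic_of_succ_lt hy_dec).antitoneOn (Set.mem_Iic.2 (by omega))
      (Set.mem_Iic.2 le_rfl) (by omega)
  set N := ‖w (k + 1)‖ + ∑ j ∈ range (k + 1), ‖w j‖
  refine ⟨2 * (N / y k) * (2 * N + N / y k) + 1, by positivity, max 1 (2 / y k), by positivity,
    fun R hR θ _ => ?_⟩
  have hR1 : 1 ≤ R := (le_max_left _ _).trans hR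
  have hR2 : 1 ≤ R ^ 2 := one_le_pow₀ hR1
  have hmR : 2 ≤ y k * R ^ 2 := by
    have := (div_le_iff₀' hy_pos).1 ((le_max_right _ _).trans hR)
    nlinarith
  rw [hv₁, hv₂]
  calc _ ≤ 2 * (N / y k) * (2 * N + N / y k) / R ^ 2 :=
        abs_symp_sumV₁_sumV₂_add_le hy_pos hy hy_last le_rfl (2 * θ) hR2 hmR
    _ ≤ _ := by gcongr; linarith
end
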